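/- Let X be a nontrivial complex Banach space and A a bounded linear operator on X. Then A = 0 if and only if σ_n(A) = {0}. -/

import Mathlib

/-!
If `A = 0`, the resolvent at `w` is `w⁻¹`, and each `z ≠ 0` lies in the half plane
`Re (e^{-i arg z} w) > 0`, on which `‖w⁻¹‖ ≤ 1 / Re (e^{-i arg z} w)`; while `0` lies in the
spectrum.

Conversely, a half plane `H_{θ,ω}` as in the definition of `ρ_n(A)` forces
`Re (e^{-iθ} j (A x)) ≤ ω ‖x‖²` for every `j ∈ J(x)`: apply `j` to
`w² R(w) x = w x + A x + A² R(w) x` at `w = e^{iθ} s` and let `s → ∞`. If `σ_n(A) = {0}`, every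
`z ≠ 0` lies in such a half plane, so `j (A x) = 0`. Hence `‖(1 - z A) v‖ ≥ ‖v‖`, and since
`σ(A) ⊆ σ_n(A) = {0}`, `z ↦ (1 - z A)⁻¹` is entire and bounded by `1`. By Liouville it is
constant, so `(1 - A)⁻¹ = 1` and `A = 0`.
-/

open Complex

variable {X : Type*} [NormedAddCommGroup X] [NormedSpace ℂ X] [CompleteSpace X]

/-- The open half plane `H_{θ,ω}`, the rotation by the angle `θ` of `{z | Re z > ω}`. -/
def halfPlane (θ ω : ℝ) : Set ℂ :=
  {z : ℂ | ω < (Complex.exp (-(θ : ℂ) * Complex.I) * z).re}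

/-- The numerical resolvent set of a bounded operator `A` : the union of all open half
planes `H_{θ,ω}` contained in the resolvent set of `A` on which
`‖R(z, A)‖ ≤ 1 / dist(z, ∂H_{θ,ω}) = 1 / (Re (e^{-iθ} z) - ω)`. -/
noncomputable def numResolventSet (A : X →L[ℂ] X) : Set ℂ :=
  {z : ℂ | ∃ θ ω : ℝ, z ∈ halfPlane θ ω ∧ halfPlane θ ω ⊆ resolventSet ℂ A ∧
    ∀ w ∈ halfPlane θ ω,
      ‖resolvent A w‖ ≤ 1 / ((Complex.exp (-(θ : ℂ) * Complex.I) * w).re - ω)}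

/-- The numerical spectrum of a bounded operator `A`. -/
noncomputable def numSpectrum (A : X →L[ℂ] X) : Set ℂ := (numResolventSet A)ᶜ

/-- The duality set `J(x)` of a vector `x`. -/
noncomputable def dualitySet (x : X) : Set (X →L[ℂ] ℂ) :=
  {j | j x = (‖x‖ ^ 2 : ℝ) ∧ ‖j‖ = ‖x‖}

open Filter Topology Bornology

lemma norm_exp_neg_mul_I (θ : ℝ) : ‖exp (-(θ : ℂ) * I)‖ = 1 := by
  simpa using norm_exp_ofReal_mul_I (-θ)

lemma re_exp_neg_mul_I_mul_le_norm (θ : ℝ) (w : ℂ) : (exp (-(θ : ℂ) * I) * w).re ≤ ‖w‖ :=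
  (re_le_norm _).trans_eq (by rw [norm_mul, norm_exp_neg_mul_I, one_mul])

lemma exp_neg_arg_mul_I_mul_self (z : ℂ) : exp (-(z.arg : ℂ) * I) * z = ‖z‖ := by
  nth_rewrite 2 [← norm_mul_exp_arg_mul_I z]
  rw [mul_left_comm, ← exp_add, neg_mul, neg_add_cancel, exp_zero, mul_one]

lemma mem_halfPlane_arg {z : ℂ} (hz : z ≠ 0) : z ∈ halfPlane z.arg 0 := by
  show 0 < (exp (-(z.arg : ℂ) * I) * z).re
  rw [exp_neg_arg_mul_I_mul_self]
  exact_mod_cast norm_pos_iff.mpr hz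

lemma ne_zero_of_mem_halfPlane_zero {θ : ℝ} {w : ℂ} (hw : w ∈ halfPlane θ 0) : w ≠ 0 := by
  rintro rfl
  simp [halfPlane] at hw

lemma resolvent_zero_eq_algebraMap_inv {𝕜 A : Type*} [Field 𝕜] [Ring A] [Algebra 𝕜 A] {w : 𝕜}
    (hw : w ≠ 0) : resolvent (0 : A) w = algebraMap 𝕜 A w⁻¹ := by
  rw [resolvent, sub_zero]
  exact Ring.inverse_unit ((Units.mk0 w hw).map (algebraMap 𝕜 A).toMonoidHom)

lemma sq_smul_resolvent {𝕜 A : Type*} [CommRing 𝕜] [Ring A] [Algebra 𝕜 A] {a : A} {w : 𝕜}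
    (hw : w ∈ resolventSet 𝕜 a) :
    w ^ 2 • resolvent a w = w • 1 + a + a * a * resolvent a w := by
  have h : w • resolvent a w = a * resolvent a w + 1 := by
    rw [← sub_eq_iff_eq_add', Algebra.smul_def, ← sub_mul]
    exact Ring.mul_inverse_cancel _ hw
  calc w ^ 2 • resolvent a w = w • (w • resolvent a w) := by rw [sq, mul_smul]
    _ = w • (a * resolvent a w + 1) := by rw [h]
    _ = a * (w • resolvent a w) + w • 1 := by rw [smul_add, mul_smul_comm]
    _ = w • 1 + a + a * a * resolvent a w := by rw [h, mul_add, mul_one, ← mul_assoc]; abel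

lemma spectralRadius_eq_zero_of_spectrum_subset {𝕜 A : Type*} [NormedField 𝕜] [Ring A]
    [Algebra 𝕜 A] {a : A} (h : spectrum 𝕜 a ⊆ {0}) : spectralRadius 𝕜 a = 0 :=
  le_antisymm (iSup₂_le fun k hk => by simp [Set.mem_singleton_iff.mp (h hk)]) bot_le

section

variable {E : Type*} [NormedAddCommGroup E] [NormedSpace ℂ E]

lemma numResolventSet_subset_resolventSet (A : E →L[ℂ] E) :
    numResolventSet A ⊆ resolventSet ℂ A := by
  rintro z ⟨θ, ω, hz, hsub, -⟩
  exact hsub hz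

lemma spectrum_subset_numSpectrum (A : E →L[ℂ] E) : spectrum ℂ A ⊆ numSpectrum A :=
  Set.compl_subset_compl.mpr (numResolventSet_subset_resolventSet A)

lemma mem_numResolventSet_zero [Nontrivial E] {z : ℂ} (hz : z ≠ 0) :
    z ∈ numResolventSet (0 : E →L[ℂ] E) := by
  refine ⟨z.arg, 0, mem_halfPlane_arg hz, fun w hw => ?_, fun w hw => ?_⟩
  · rw [spectrum.mem_resolventSet_iff, sub_zero]
    exact (Ne.isUnit (ne_zero_of_mem_halfPlane_zero hw)).map _
  · rw [resolvent_zero_eq_algebraMap_inv (ne_zero_of_mem_halfPlane_zero hw), norm_algebraMap',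
      norm_inv, sub_zero, one_div]
    exact inv_anti₀ hw (re_exp_neg_mul_I_mul_le_norm _ w)

lemma numSpectrum_zero [Nontrivial E] : numSpectrum (0 : E →L[ℂ] E) = {0} := by
  refine subset_antisymm (fun z hz => ?_) ?_
  · by_contra h
    exact hz (mem_numResolventSet_zero h)
  · simpa [spectrum.zero_eq] using spectrum_subset_numSpectrum (0 : E →L[ℂ] E)

lemma dualitySet_nonempty (x : E) : (dualitySet x).Nonempty := by
  rcases eq_or_ne x 0 with rfl | hx
  · exact ⟨0, by simp [dualitySet]⟩
  obtain ⟨g, hg, hgx⟩ := exists_dual_vector ℂ x (norm_ne_zero_iff.mpr hx)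
  refine ⟨(‖x‖ : ℂ) • g, ?_, ?_⟩
  · simp [hgx, sq]
  · rw [norm_smul, hg, mul_one, norm_real, norm_norm]

lemma norm_apply_le_of_mem_dualitySet {x : E} {j : E →L[ℂ] ℂ} (hj : j ∈ dualitySet x) (y : E) :
    ‖j y‖ ≤ ‖x‖ * ‖y‖ :=
  (j.le_opNorm y).trans_eq (by rw [hj.2])

lemma abs_re_mul_apply_le {x : E} {j : E →L[ℂ] ℂ} (hj : j ∈ dualitySet x) (c : ℂ) (y : E) :
    |(c * j y).re| ≤ ‖c‖ * (‖x‖ * ‖y‖) :=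
  (abs_re_le_norm _).trans (by rw [norm_mul]; gcongr; exact norm_apply_le_of_mem_dualitySet hj y)

lemma sq_mul_apply_resolvent_apply {A : E →L[ℂ] E} {w : ℂ} (hw : w ∈ resolventSet ℂ A) {x : E}
    {j : E →L[ℂ] ℂ} (hj : j ∈ dualitySet x) :
    w ^ 2 * j (resolvent A w x) = w * (‖x‖ ^ 2 : ℝ) + j (A x) + j (A (A (resolvent A w x))) := by
  simpa only [smul_apply, add_apply, mul_apply_eq_comp, one_apply_eq_self, map_smul, map_add,
    smul_eq_mul, hj.1] using congr_arg (fun T => j (T x)) (sq_smul_resolvent hw)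

lemma re_exp_mul_apply_le_of_lt (A : E →L[ℂ] E) {θ ω : ℝ}
    (hsub : halfPlane θ ω ⊆ resolventSet ℂ A)
    (hbd : ∀ w ∈ halfPlane θ ω, ‖resolvent A w‖ ≤ 1 / ((exp (-(θ : ℂ) * I) * w).re - ω))
    {x : E} {j : E →L[ℂ] ℂ} (hj : j ∈ dualitySet x) {s : ℝ} (hs : ω < s) :
    (exp (-(θ : ℂ) * I) * j (A x)).re ≤ ‖x‖ ^ 2 * (ω + (ω ^ 2 + ‖A‖ ^ 2) / (s - ω)) := by
  set e := exp (-(θ : ℂ) * I)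
  set u := exp ((θ : ℂ) * I)
  have heu : e * u = 1 := by rw [← exp_add, neg_mul, neg_add_cancel, exp_zero]
  set w : ℂ := u * s
  have hew : e * w = s := by rw [← mul_assoc, heu, one_mul]
  have hw : w ∈ halfPlane θ ω := by
    show ω < (e * w).re
    simpa [hew] using hs
  set R := resolvent A w
  have hRx : ‖R x‖ ≤ ‖x‖ / (s - ω) := by
    have hR : ‖R‖ ≤ 1 / (s - ω) := by simpa [hew] using hbd w hw
    calc ‖R x‖ ≤ ‖R‖ * ‖x‖ := R.le_opNorm x
      _ ≤ 1 / (s - ω) * ‖x‖ := by gcongr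
      _ = ‖x‖ / (s - ω) := by ring
  have hexp :
      u * s ^ 2 * j (R x) = ((s * ‖x‖ ^ 2 : ℝ) : ℂ) + e * j (A x) + e * j (A (A (R x))) := by
    have h := sq_mul_apply_resolvent_apply (hsub hw) hj
    push_cast at h ⊢
    linear_combination e * h + (s * ‖x‖ ^ 2 - u * s ^ 2 * j (R x)) * heu
  have hAARx : ‖A (A (R x))‖ ≤ ‖A‖ * (‖A‖ * (‖x‖ / (s - ω))) :=
    (A.le_opNorm _).trans (by gcongr; exact (A.le_opNorm _).trans (by gcongr))
  have hfirst := abs_le.mp (abs_re_mul_apply_le hj (u * s ^ 2) (R x))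
  have hlast := abs_le.mp (abs_re_mul_apply_le hj e (A (A (R x))))
  have hu : ‖u‖ = 1 := norm_exp_ofReal_mul_I θ
  have he : ‖e‖ = 1 := norm_exp_neg_mul_I θ
  simp only [norm_mul, hu, he, one_mul, norm_pow, norm_real, Real.norm_eq_abs, sq_abs]
    at hfirst hlast
  have hre := congr_arg re hexp
  simp only [add_re, ofReal_re] at hre
  have hsω : s - ω ≠ 0 := (sub_pos.mpr hs).ne'
  calc (e * j (A x)).re ≤ s ^ 2 * (‖x‖ * ‖R x‖) - s * ‖x‖ ^ 2 + ‖x‖ * ‖A (A (R x))‖ := by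
        linarith
    _ ≤ s ^ 2 * (‖x‖ * (‖x‖ / (s - ω))) - s * ‖x‖ ^ 2
        + ‖x‖ * (‖A‖ * (‖A‖ * (‖x‖ / (s - ω)))) := by gcongr
    _ = ‖x‖ ^ 2 * (ω + (ω ^ 2 + ‖A‖ ^ 2) / (s - ω)) := by
        field_simp
        ring

lemma re_exp_mul_apply_le (A : E →L[ℂ] E) {θ ω : ℝ}
    (hsub : halfPlane θ ω ⊆ resolventSet ℂ A)
    (hbd : ∀ w ∈ halfPlane θ ω, ‖resolvent A w‖ ≤ 1 / ((exp (-(θ : ℂ) * I) * w).re - ω))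
    {x : E} {j : E →L[ℂ] ℂ} (hj : j ∈ dualitySet x) :
    (exp (-(θ : ℂ) * I) * j (A x)).re ≤ ‖x‖ ^ 2 * ω := by
  have hlim : Tendsto (fun s : ℝ => ‖x‖ ^ 2 * (ω + (ω ^ 2 + ‖A‖ ^ 2) / (s - ω))) atTop
      (𝓝 (‖x‖ ^ 2 * (ω + 0))) :=
    tendsto_const_nhds.mul <| tendsto_const_nhds.add <| tendsto_const_nhds.div_atTop <| by
      simpa [sub_eq_add_neg] using tendsto_atTop_add_const_right atTop (-ω) tendsto_id
  rw [add_zero] at hlim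
  exact ge_of_tendsto hlim <|
    (eventually_gt_atTop ω).mono fun s hs => re_exp_mul_apply_le_of_lt A hsub hbd hj hs

lemma apply_eq_zero_of_numSpectrum_subset {A : E →L[ℂ] E} (h : numSpectrum A ⊆ {0}) {x : E}
    {j : E →L[ℂ] ℂ} (hj : j ∈ dualitySet x) : j (A x) = 0 := by
  by_contra hz
  have hx : 0 < ‖x‖ ^ 2 := by
    refine pow_pos (norm_pos_iff.mpr ?_) 2
    rintro rfl
    simp at hz
  obtain ⟨θ, ω, hmem, hsub, hbd⟩ : j (A x) / (‖x‖ ^ 2 : ℝ) ∈ numResolventSet A := by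
    by_contra hn
    exact div_ne_zero hz (by exact_mod_cast hx.ne') (h hn)
  have hle := re_exp_mul_apply_le A hsub hbd hj
  rw [halfPlane, Set.mem_ofPred_eq, ← mul_div_assoc, div_ofReal_re, lt_div_iff₀ hx] at hmem
  linarith

lemma norm_le_norm_one_sub_smul_apply {A : E →L[ℂ] E}
    (hA : ∀ x, ∀ j ∈ dualitySet x, j (A x) = 0) (z : ℂ) (v : E) : ‖v‖ ≤ ‖(1 - z • A) v‖ := by
  obtain ⟨j, hj⟩ := dualitySet_nonempty v
  have hjv : j ((1 - z • A) v) = (‖v‖ ^ 2 : ℝ) := by simp [hA v j hj, hj.1]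
  have := norm_apply_le_of_mem_dualitySet hj ((1 - z • A) v)
  rw [hjv, norm_real, Real.norm_of_nonneg (by positivity)] at this
  nlinarith [norm_nonneg v, norm_nonneg ((1 - z • A) v)]

lemma norm_inverse_le_one {T : E →L[ℂ] E} (hT : IsUnit T) (h : ∀ v, ‖v‖ ≤ ‖T v‖) :
    ‖Ring.inverse T‖ ≤ 1 :=
  ContinuousLinearMap.opNorm_le_bound _ zero_le_one fun v => by
    simpa [← mul_apply_eq_comp, Ring.mul_inverse_cancel T hT] using h (Ring.inverse T v)

end

lemma eq_zero_of_spectrum_subset_of_dualitySet_apply_eq_zero {A : X →L[ℂ] X}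
    (hσ : spectrum ℂ A ⊆ {0}) (hA : ∀ x, ∀ j ∈ dualitySet x, j (A x) = 0) : A = 0 := by
  have hunit (z : ℂ) : IsUnit (1 - z • A) := spectrum.isUnit_one_sub_smul_of_lt_inv_radius <| by
    simp [spectralRadius_eq_zero_of_spectrum_subset hσ]
  have hf : Differentiable ℂ fun z : ℂ => Ring.inverse (1 - z • A) := by
    intro z
    have h : DifferentiableAt ℂ (fun z : ℂ => 1 - z • A) z := by fun_prop
    exact (differentiableAt_inverse (hunit z)).comp z h
  have hbdd : IsBounded (Set.range fun z : ℂ => Ring.inverse (1 - z • A)) :=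
    isBounded_iff_forall_norm_le.2 ⟨1, by
      rintro _ ⟨z, rfl⟩
      exact norm_inverse_le_one (hunit z) (norm_le_norm_one_sub_smul_apply hA z)⟩
  have hf1 : Ring.inverse (1 - A) = 1 := by
    simpa using hf.apply_eq_apply_of_bounded hbdd 1 0
  have hinv := Ring.inverse_mul_cancel _ (by simpa using hunit 1)
  rw [hf1, one_mul] at hinv
  exact sub_eq_self.mp hinv

/-- `A = 0` if and only if `σ_n(A) = {0}`. -/
theorem eq_zero_iff_numSpectrum_eq_zero [Nontrivial X] (A : X →L[ℂ] X) :
    A = 0 ↔ numSpectrum A = {0} := by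
  refine ⟨fun hA => hA ▸ numSpectrum_zero, fun h => ?_⟩
  exact eq_zero_of_spectrum_subset_of_dualitySet_apply_eq_zero (h ▸ spectrum_subset_numSpectrum A)
    fun _ _ hj => apply_eq_zero_of_numSpectrum_subset h.subset hj
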